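/- Let p be a prime and suppose G is p-divisible, i.e., for every x ∈ G there exists y ∈ G with p•y = x. Write G[p^∞] and T[p^∞] for the subgroups of G and of T(G,q) consisting of elements killed by some power of p. Then the map ι(g) = [(g,0)] restricts to an injective homomorphism G[p^∞] → T[p^∞]; the map ε([(g,a)]) = a + ℤ sends T[p^∞] into the subgroup ℤ[1/p]/ℤ of ℚ/ℤ (classes of rationals whose denominator is a power of p) and is surjective onto ℤ[1/p]/ℤ; and the kernel of ε restricted to T[p^∞] is exactly the image of G[p^∞]. In other words, there is a short exact sequence 0 → G[p^∞] → T[p^∞] → ℤ[1/p]/ℤ → 0. -/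
import Mathlib


/-- The Tate group `T(G,q) = (G × ℚ) ⧸ ⟨(q,1)⟩`. -/
abbrev TateGroup (G : Type*) [AddCommGroup G] (q : G) : Type _ :=
  (G × ℚ) ⧸ AddSubgroup.zmultiples (q, (1 : ℚ))

/-- The homomorphism `ι : G → T(G,q)`, `ι(g) = [(g,0)]`. -/
def tateIota (G : Type*) [AddCommGroup G] (q : G) : G →+ TateGroup G q :=
  (QuotientAddGroup.mk' (AddSubgroup.zmultiples (q, (1 : ℚ)))).comp (AddMonoidHom.inl G ℚ)

/-- The homomorphism `ε : T(G,q) → ℚ/ℤ`, `ε [(g,a)] = a + ℤ`. -/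
def tateEps (G : Type*) [AddCommGroup G] (q : G) :
    TateGroup G q →+ ℚ ⧸ AddSubgroup.zmultiples (1 : ℚ) :=
  QuotientAddGroup.map _ _ (AddMonoidHom.snd G ℚ) (by
    rintro ⟨g, a⟩ hga
    obtain ⟨n, hn⟩ := AddSubgroup.mem_zmultiples_iff.mp hga
    refine AddSubgroup.mem_comap.mpr (AddSubgroup.mem_zmultiples_iff.mpr ⟨n, ?_⟩)
    have := congrArg Prod.snd hn
    simpa using this)

/-- The subgroup `ℤ[1/p]/ℤ` of `ℚ/ℤ`: classes of rationals whose denominator is a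
power of `p`. -/
def zOneOverP (p : ℕ) : Set (ℚ ⧸ AddSubgroup.zmultiples (1 : ℚ)) :=
  {r | ∃ (a : ℤ) (n : ℕ),
    r = QuotientAddGroup.mk' (AddSubgroup.zmultiples (1 : ℚ)) ((a : ℚ) / (p : ℚ) ^ n)}

theorem stmt6 (G : Type*) [AddCommGroup G] (q : G) (p : ℕ) (hp : p.Prime)
    (hdiv : ∀ x : G, ∃ y : G, p • y = x) :
    (∀ g : G, (∃ n : ℕ, p ^ n • g = 0) → ∃ n : ℕ, p ^ n • tateIota G q g = 0) ∧
    Set.InjOn (tateIota G q) {g : G | ∃ n : ℕ, p ^ n • g = 0} ∧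
    (∀ t : TateGroup G q, (∃ n : ℕ, p ^ n • t = 0) → tateEps G q t ∈ zOneOverP p) ∧
    (∀ s ∈ zOneOverP p,
      ∃ t : TateGroup G q, (∃ n : ℕ, p ^ n • t = 0) ∧ tateEps G q t = s) ∧
    (∀ t : TateGroup G q, (∃ n : ℕ, p ^ n • t = 0) →
      (tateEps G q t = 0 ↔ ∃ g : G, (∃ n : ℕ, p ^ n • g = 0) ∧ tateIota G q g = t)) := by

  have hp0 : (p:ℚ) ≠ 0 := by exact_mod_cast hp.ne_zero
  -- iota is injective
  have hinj : Function.Injective (tateIota G q) := by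
    intro g g' h
    have h' : (QuotientAddGroup.mk ((g,(0:ℚ))) : TateGroup G q)
        = QuotientAddGroup.mk (g', (0:ℚ)) := h
    have h2 := QuotientAddGroup.eq_iff_sub_mem.mp h'
    obtain ⟨n, hn⟩ := AddSubgroup.mem_zmultiples_iff.mp h2
    have hn2 := congrArg Prod.snd hn
    simp only [Prod.smul_snd, Prod.snd_sub, sub_zero, smul_eq_mul, mul_one,
      zsmul_eq_mul, Int.cast_eq_zero, sub_self] at hn2
    subst hn2
    have hn1 := congrArg Prod.fst hn
    simp only [zero_zsmul, Prod.fst_zero, Prod.fst_sub] at hn1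
    exact sub_eq_zero.mp hn1.symm
  -- p^n-divisibility
  have hdivn : ∀ (n : ℕ) (x : G), ∃ y : G, p ^ n • y = x := by
    intro n
    induction n with
    | zero => intro x; exact ⟨x, by simp⟩
    | succ n ih =>
      intro x
      obtain ⟨y, hy⟩ := hdiv x
      obtain ⟨z, hz⟩ := ih y
      exact ⟨z, by rw [pow_succ, mul_comm, mul_smul, hz, hy]⟩
  refine ⟨?_, ?_, ?_, ?_, ?_⟩
  · intro g ⟨n, hn⟩
    exact ⟨n, by rw [← map_nsmul, hn, map_zero]⟩
  · exact hinj.injOn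
  · intro t ⟨n, hn⟩
    obtain ⟨⟨g, a⟩, rfl⟩ := QuotientAddGroup.mk'_surjective _ t
    have hn' : ((p ^ n • (g, a) : G × ℚ) : TateGroup G q) = 0 := by
      rw [QuotientAddGroup.mk_nsmul]; exact hn
    have h2 : (p ^ n • (g, a) : G × ℚ) ∈ AddSubgroup.zmultiples (q, (1:ℚ)) :=
      (QuotientAddGroup.eq_zero_iff _).mp hn'
    obtain ⟨m, hm⟩ := AddSubgroup.mem_zmultiples_iff.mp h2
    have hm2 := congrArg Prod.snd hm
    simp only [Prod.smul_snd, smul_eq_mul, mul_one, zsmul_eq_mul, nsmul_eq_mul] at hm2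
    refine ⟨m, n, ?_⟩
    have ha : a = (m : ℚ) / (p:ℚ) ^ n := by
      rw [eq_div_iff (by positivity)]
      rw [mul_comm]
      exact_mod_cast hm2.symm
    show QuotientAddGroup.mk a = _
    rw [ha]; rfl
  · rintro s ⟨a, n, rfl⟩
    obtain ⟨y, hy⟩ := hdivn n (a • q)
    refine ⟨QuotientAddGroup.mk (y, (a:ℚ) / (p:ℚ) ^ n), ⟨n, ?_⟩, rfl⟩
    rw [← QuotientAddGroup.mk_nsmul, QuotientAddGroup.eq_zero_iff]
    have heq : (p ^ n • (y, (a:ℚ) / (p:ℚ) ^ n) : G × ℚ) = (a • q, (a:ℚ)) := by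
      refine Prod.ext (by simpa using hy) ?_
      show (p ^ n : ℕ) • ((a:ℚ) / (p:ℚ) ^ n) = (a:ℚ)
      rw [nsmul_eq_mul]
      push_cast
      field_simp
    rw [heq]
    exact AddSubgroup.mem_zmultiples_iff.mpr ⟨a, by simp⟩
  · intro t ht
    constructor
    · intro he
      obtain ⟨n, hn⟩ := ht
      obtain ⟨⟨g, a⟩, rfl⟩ := QuotientAddGroup.mk'_surjective _ t
      have h2 : a ∈ AddSubgroup.zmultiples (1:ℚ) :=
        (QuotientAddGroup.eq_zero_iff _).mp he
      obtain ⟨m, hm⟩ := AddSubgroup.mem_zmultiples_iff.mp h2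
      simp only [smul_eq_mul, mul_one, zsmul_eq_mul] at hm
      have key : tateIota G q (g - m • q) = QuotientAddGroup.mk' _ (g, a) := by
        show (QuotientAddGroup.mk (g - m • q, (0:ℚ)) : TateGroup G q)
          = QuotientAddGroup.mk (g, a)
        refine QuotientAddGroup.eq_iff_sub_mem.mpr
          (AddSubgroup.mem_zmultiples_iff.mpr ⟨-m, Prod.ext ?_ ?_⟩)
        · show -m • q = ((g - m • q, (0:ℚ)) - (g, a)).1
          simp only [Prod.fst_sub, neg_smul, sub_sub_cancel_left]
        · show (-m : ℤ) • (1:ℚ) = ((g - m • q, (0:ℚ)) - (g, a)).2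
          simp [← hm]
      refine ⟨g - m • q, ⟨n, hinj ?_⟩, key⟩
      rw [map_nsmul, map_zero, key, hn]
    · rintro ⟨g, _, rfl⟩
      rfl
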